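/- arXiv:1403.0359 — 3 statements merged into one kernel-verified Lean document; each statement's English description precedes it below -/
import Mathlib

section
/- Let G be a connected claw-free graph with diameter d, and let I and J be independent sets with |I| = |J| such that G[I △ J] contains no cycles. Then there exists a TS-sequence from I to J of length at most 2 · |I \ J| · d. -/
open SimpleGraph

/-- A graph is claw-free if no vertex has three pairwise nonadjacent neighbors. -/
def ClawFree {V : Type} (G : SimpleGraph V) : Prop :=
  ¬ ∃ v a b c : V, G.Adj v a ∧ G.Adj v b ∧ G.Adj v c ∧
    a ≠ b ∧ a ≠ c ∧ b ≠ c ∧ ¬G.Adj a b ∧ ¬G.Adj a c ∧ ¬G.Adj b c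

/-- `s` is an independent set of `G`. -/
def Indep {V : Type} (G : SimpleGraph V) (s : Set V) : Prop :=
  ∀ u ∈ s, ∀ v ∈ s, ¬G.Adj u v

/-- Token sliding step between independent sets. -/
def TSStep {V : Type} (G : SimpleGraph V) (I J : Set V) : Prop :=
  Indep G I ∧ Indep G J ∧ ∃ u v : V, G.Adj u v ∧ I \ J = {u} ∧ J \ I = {v}

/-- Token jumping step between independent sets. -/
def TJStep {V : Type} (G : SimpleGraph V) (I J : Set V) : Prop :=
  Indep G I ∧ Indep G J ∧ ∃ u v : V, I \ J = {u} ∧ J \ I = {v}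

/-- Reachability under token sliding. -/
def TSReach {V : Type} (G : SimpleGraph V) : Set V → Set V → Prop :=
  Relation.ReflTransGen (TSStep G)

/-- Reachability under token jumping. -/
def TJReach {V : Type} (G : SimpleGraph V) : Set V → Set V → Prop :=
  Relation.ReflTransGen (TJStep G)

/-- The neighbors of `v` inside the set `B`. -/
def nbrsIn {V : Type} (G : SimpleGraph V) (B : Set V) (v : V) : Set V :=
  {u ∈ B | G.Adj v u}

/-- `Nset G B i` is the set `N_i(B)` of vertices outside `B` with exactly `i` neighbors in `B`. -/
def Nset {V : Type} (G : SimpleGraph V) (B : Set V) (i : ℕ) : Set V :=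
  {v | v ∉ B ∧ (nbrsIn G B v).ncard = i}

/-- The neighborhood of a set. -/
def Nbhd {V : Type} (G : SimpleGraph V) (S : Set V) : Set V :=
  {w | ∃ u ∈ S, G.Adj w u}

/-- An `I`-bad cycle: a chordless `I`-alternating cycle `c 0, c 1, …, c (2n-1), c 0`
with `c j ∈ I` exactly for even `j`. -/
def IsBadCycle {V : Type} (G : SimpleGraph V) (I : Set V) (n : ℕ) (c : ZMod (2*n) → V) : Prop :=
  2 ≤ n ∧ Function.Injective c ∧
  (∀ j : ZMod (2*n), G.Adj (c j) (c (j + 1))) ∧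
  (∀ i j : ZMod (2*n), G.Adj (c i) (c j) → j = i + 1 ∨ i = j + 1) ∧
  (∀ j : ZMod (2*n), c j ∈ I ↔ Even (ZMod.val j))

/-- The part `A = V(C) ∩ I` of the `I`-bipartition of a bad cycle. -/
def cycA {V : Type} {n : ℕ} (c : ZMod (2*n) → V) : Set V :=
  c '' {j | Even (ZMod.val j)}

/-- The part `B = V(C) \ I` of the `I`-bipartition of a bad cycle. -/
def cycB {V : Type} {n : ℕ} (c : ZMod (2*n) → V) : Set V :=
  c '' {j | ¬ Even (ZMod.val j)}

/-- The bad cycle `c` is resolvable with respect to `I`. -/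
def Resolvable {V : Type} (G : SimpleGraph V) (I : Set V) {n : ℕ} (c : ZMod (2*n) → V) : Prop :=
  ∃ I' : Set V, TSReach G I I' ∧ (G.induce (I' ∪ cycB c)).IsAcyclic

/-- A vertex is free w.r.t. `I` if it is outside `I` and has at most one neighbor in `I`. -/
def FreeVert {V : Type} (G : SimpleGraph V) (I : Set V) (v : V) : Prop :=
  v ∉ I ∧ (nbrsIn G I v).ncard ≤ 1

/-- An `I`-augmenting path `x 0, x 1, …, x (2k)`: an `I`-alternating chordless path of
length `2k ≥ 2` whose endpoints are free vertices. -/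
def IsAugPath {V : Type} (G : SimpleGraph V) (I : Set V) (k : ℕ) (x : Fin (2*k+1) → V) : Prop :=
  1 ≤ k ∧ Function.Injective x ∧
  (∀ j : Fin (2*k), G.Adj (x j.castSucc) (x j.succ)) ∧
  (∀ i j : Fin (2*k+1), G.Adj (x i) (x j) → i.val + 1 = j.val ∨ j.val + 1 = i.val) ∧
  (∀ j : Fin (2*k+1), x j ∈ I ↔ Odd j.val) ∧
  FreeVert G I (x 0) ∧ FreeVert G I (x (Fin.last (2*k)))

/-!
Because `G[I △ J]` is a forest on `2 |I \ J|` vertices and every one of its edges meets the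
independent set `J \ I`, some `w ∈ J \ I` has at most one neighbour `u` in `I`, so
`I - u + w` is independent. In a claw-free graph the token on `u` reaches `w` in at most
`2 dist(u, w)` slides: it walks along a shortest path, and when the next vertex `y` is blocked
by a second token `z`, claw-freeness at `y` puts `z` one step closer to `w`; then `z` moves to
`w` first (by induction) and `u` slides to `z` through `y`. Since `(I - u + w) △ J ⊆ I △ J`,
repeating this for each of the `|I \ J|` tokens gives the bound.
-/

open Finset

namespace SimpleGraph

variable {W : Type*} {H : SimpleGraph W}

theorem IsAcyclic.card_edgeFinset_lt [Fintype W] [Nonempty W] [DecidableRel H.Adj]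
    (hH : H.IsAcyclic) : #H.edgeFinset < Fintype.card W := by
  classical
  obtain ⟨T, hHT, -, hT⟩ := connected_top.exists_isTree_le_of_le_of_isAcyclic le_top hH
  calc #H.edgeFinset ≤ #T.edgeFinset := card_le_card (edgeFinset_mono hHT)
    _ < Fintype.card W := by have := hT.card_edgeFinset; omega

theorem IsIndepSet.sum_degree_le_sum_degree_compl [Fintype W] [DecidableEq W]
    [DecidableRel H.Adj] {B : Finset W} (hB : H.IsIndepSet B) :
    ∑ b ∈ B, H.degree b ≤ ∑ a ∈ Bᶜ, H.degree a := by
  have hdeg : ∀ b ∈ B, H.degree b = #(Bᶜ.bipartiteAbove H.Adj b) := by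
    intro b hb
    rw [← card_neighborFinset_eq_degree]
    congr 1
    ext a
    simp only [mem_neighborFinset, mem_bipartiteAbove, mem_compl, iff_and_self]
    exact fun hab ha => hB hb ha (H.ne_of_adj hab) hab
  rw [sum_congr rfl hdeg, sum_card_bipartiteAbove_eq_sum_card_bipartiteBelow]
  refine sum_le_sum fun a _ => card_le_card fun b hb => ?_
  rw [mem_bipartiteBelow] at hb
  exact (H.mem_neighborFinset a b).mpr hb.2.symm

theorem IsAcyclic.exists_degree_le_one_of_isIndepSet [Fintype W] [DecidableEq W]
    [DecidableRel H.Adj] (hH : H.IsAcyclic) {B : Finset W} (hB : H.IsIndepSet B)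
    (hcard : Fintype.card W ≤ 2 * #B) (hne : B.Nonempty) : ∃ b ∈ B, H.degree b ≤ 1 := by
  by_contra! hdeg
  have : Nonempty W := ⟨hne.choose⟩
  have hlow : 2 * #B ≤ ∑ b ∈ B, H.degree b := by
    simpa [mul_comm] using card_nsmul_le_sum B (H.degree ·) 2 hdeg
  have := hH.card_edgeFinset_lt
  have := hB.sum_degree_le_sum_degree_compl
  have := sum_add_sum_compl B (H.degree ·)
  have := H.sum_degrees_eq_twice_card_edges
  omega

end SimpleGraph

section TokenSliding

variable {V : Type} {G : SimpleGraph V} {I J K : Set V} {a b : V}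

theorem indep_insert : Indep G (insert a K) ↔ Indep G K ∧ ∀ x ∈ K, ¬G.Adj a x := by
  refine ⟨fun h => ⟨fun x hx y hy => h x (.inr hx) y (.inr hy),
    fun x hx => h a (.inl rfl) x (.inr hx)⟩, fun ⟨hK, ha⟩ => ?_⟩
  rintro x (rfl | hx) y (rfl | hy) hxy
  · exact G.loopless.irrefl _ hxy
  · exact ha y hy hxy
  · exact ha x hx hxy.symm
  · exact hK x hx y hy hxy

theorem Indep.mono (hI : Indep G I) (hJI : J ⊆ I) : Indep G J :=
  fun x hx y hy => hI x (hJI hx) y (hJI hy)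

theorem TSStep.symm (h : TSStep G I J) : TSStep G J I := by
  obtain ⟨hI, hJ, u, v, huv, hIJ, hJI⟩ := h
  exact ⟨hJ, hI, v, u, huv.symm, hJI, hIJ⟩

theorem TSStep.ne (h : TSStep G I J) : I ≠ J := by
  rintro rfl
  obtain ⟨-, -, u, -, -, h, -⟩ := h
  simpa using h.symm.subset (Set.mem_singleton u)

def tsGraph (G : SimpleGraph V) : SimpleGraph (Set V) where
  Adj := TSStep G
  symm := ⟨fun _ _ => TSStep.symm⟩
  loopless := ⟨fun _ h => h.ne rfl⟩

theorem tsGraph_adj_insert (ha : a ∉ K) (hb : b ∉ K) (hab : G.Adj a b)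
    (hIa : Indep G (insert a K)) (hIb : Indep G (insert b K)) :
    (tsGraph G).Adj (insert a K) (insert b K) := by
  have := G.ne_of_adj hab
  refine ⟨hIa, hIb, a, b, hab, ?_, ?_⟩ <;> ext x <;>
    simp only [Set.mem_sdiff, Set.mem_insert_iff, Set.mem_singleton_iff] <;> grind

end TokenSliding

section ClawFree

variable {V : Type} {G : SimpleGraph V}

theorem ClawFree.eq_or_adj (hG : ClawFree G) {v a b c : V}
    (ha : G.Adj v a) (hb : G.Adj v b) (hc : G.Adj v c) (hab : a ≠ b) (hac : a ≠ c)
    (hab' : ¬G.Adj a b) (hac' : ¬G.Adj a c) : b = c ∨ G.Adj b c := by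
  by_contra! h
  exact hG ⟨v, a, b, c, ha, hb, hc, hab, hac, h.1, hab', hac', h.2⟩

theorem ClawFree.exists_tsWalk_slide_through (hG : ClawFree G) {L : Set V} {u y z : V}
    (hS : Indep G (insert u (insert z L))) (hu : u ∉ insert z L) (hz : z ∉ L)
    (huy : G.Adj u y) (hyz : G.Adj y z) :
    ∃ p : (tsGraph G).Walk (insert u L) (insert z L), p.length = 2 := by
  obtain ⟨hIz, huS⟩ := indep_insert.mp hS
  obtain ⟨hL, hzL⟩ := indep_insert.mp hIz
  have hIu : Indep G (insert u L) := indep_insert.mpr ⟨hL, fun x hx => huS x (.inr hx)⟩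
  have hy : y ∉ L := fun hy => huS y (.inr hy) huy
  have hIy : Indep G (insert y L) := indep_insert.mpr ⟨hL, fun x hx hyx => by
    rcases hG.eq_or_adj huy.symm hyz hyx (fun h => hu (.inl h)) (fun h => hu (.inr (h ▸ hx)))
      (huS z (.inl rfl)) (huS x (.inr hx)) with rfl | hzx
    exacts [hz hx, hzL x hx hzx]⟩
  exact ⟨.cons (tsGraph_adj_insert (fun h => hu (.inr h)) hy huy hIu hIy)
    (.cons (tsGraph_adj_insert hy hz hyz hIy hIz) .nil), rfl⟩

theorem ClawFree.exists_walk_length_lt_dist (hG : ClawFree G) {u y z p w : V}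
    (huy : G.Adj u y) (hyz : G.Adj y z) (hyp : G.Adj y p) (hzu : z ≠ u) (huz : ¬G.Adj u z)
    (r : G.Walk p w) (hr : r.length + 2 = G.dist u w) :
    ∃ s : G.Walk z w, s.length < G.dist u w := by
  have hup : u ≠ p := by rintro rfl; have := dist_le r; omega
  have hup' : ¬G.Adj u p := fun h => by
    have := dist_le (r.cons h); rw [Walk.length_cons] at this; omega
  rcases hG.eq_or_adj huy.symm hyz hyp hzu.symm hup huz hup' with rfl | hzp
  · exact ⟨r, by omega⟩
  · exact ⟨r.cons hzp, by rw [Walk.length_cons]; omega⟩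

theorem ClawFree.exists_tsWalk_insert_of_blocked (hG : ClawFree G) {K : Set V} {u y z w : V}
    {m : ℕ} (hz : z ∉ K) (hu : u ∉ insert z K) (hw : w ∉ insert z K) (huw : u ≠ w)
    (huw' : ¬G.Adj u w) (hIu : Indep G (insert u (insert z K)))
    (hIw : Indep G (insert w (insert z K))) (huy : G.Adj u y) (hyz : G.Adj y z)
    (hjump : ∀ {L : Set V}, z ∉ L → w ∉ L → Indep G (insert z L) → Indep G (insert w L) →
      ∃ p : (tsGraph G).Walk (insert z L) (insert w L), p.length ≤ m) :
    ∃ p : (tsGraph G).Walk (insert u (insert z K)) (insert w (insert z K)), p.length ≤ m + 2 := by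
  have huK := (indep_insert.mp hIu).2
  have hS : Indep G (insert u (insert z (insert w K))) := indep_insert.mpr
    ⟨Set.insert_comm w z K ▸ hIw, by
      rintro x (rfl | rfl | hx)
      exacts [huK x (.inl rfl), huw', huK x (.inr hx)]⟩
  obtain ⟨p₁, hp₁⟩ := hjump (L := insert u K)
    (by rintro (h | h); exacts [hu (.inl h.symm), hz h])
    (by rintro (h | h); exacts [huw h.symm, hw (.inr h)])
    (Set.insert_comm u z K ▸ hIu)
    (hS.mono (by intro x; simp only [Set.mem_insert_iff]; tauto))
  obtain ⟨p₂, hp₂⟩ := hG.exists_tsWalk_slide_through hS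
    (by rintro (h | h | h); exacts [hu (.inl h), huw h, hu (.inr h)])
    (by rintro (h | h); exacts [hw (h ▸ .inl rfl), hz h]) huy hyz
  refine ⟨(p₁.copy (Set.insert_comm z u K) (Set.insert_comm w u K)).append
    (p₂.copy rfl (Set.insert_comm z w K)), ?_⟩
  rw [Walk.length_append, Walk.length_copy, Walk.length_copy]
  omega

theorem ClawFree.exists_tsWalk_insert (hG : ClawFree G) {K : Set V} {u w : V}
    (hu : u ∉ K) (hw : w ∉ K) (hIu : Indep G (insert u K)) (hIw : Indep G (insert w K))
    (hr : G.Reachable u w) :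
    ∃ p : (tsGraph G).Walk (insert u K) (insert w K), p.length ≤ 2 * G.dist u w := by
  obtain ⟨n, hn⟩ : ∃ n, G.dist u w = n := ⟨_, rfl⟩
  induction n using Nat.strong_induction_on generalizing K u w with
  | _ n ih =>
  obtain ⟨p, hp⟩ := hr.exists_walk_length_eq_dist
  cases p with
  | nil => exact ⟨.nil, Nat.zero_le _⟩
  | @cons _ y _ huy q =>
  obtain ⟨hK, huK⟩ := indep_insert.mp hIu
  rw [Walk.length_cons, hn] at hp
  by_cases hblocked : ∃ z ∈ K, G.Adj y z
  · -- Claw-freeness at `y` puts `z` closer to `w` than `u`: `z` jumps to `w` first.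
    obtain ⟨z, hzK, hyz⟩ := hblocked
    obtain ⟨K₀, hzK₀, rfl⟩ : ∃ K₀, z ∉ K₀ ∧ K = insert z K₀ :=
      ⟨K \ {z}, by simp, (Set.insert_sdiff_self_of_mem hzK).symm⟩
    cases q with
    | nil => exact absurd hyz ((indep_insert.mp hIw).2 z (.inl rfl))
    | cons hyp r =>
    rw [Walk.length_cons] at hp
    have huw : u ≠ w := by rintro rfl; rw [SimpleGraph.dist_self] at hn; omega
    have huw' : ¬G.Adj u w := fun h => by rw [dist_eq_one_iff_adj.mpr h] at hn; omega
    obtain ⟨s, hs⟩ := hG.exists_walk_length_lt_dist huy hyz hyp (fun h => hu (.inl h.symm))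
      (huK z (.inl rfl)) r (by omega)
    obtain ⟨p, hp'⟩ := hG.exists_tsWalk_insert_of_blocked hzK₀ hu hw huw huw' hIu hIw huy hyz
      fun hzL hwL hIz hIw' => ih _ (by have := dist_le s; omega) hzL hwL hIz hIw' ⟨s⟩ rfl
    exact ⟨p, by have := dist_le s; omega⟩
  · push Not at hblocked
    have hyK : y ∉ K := fun hy => huK y hy huy
    have hIy : Indep G (insert y K) := indep_insert.mpr ⟨hK, hblocked⟩
    obtain ⟨p, hp'⟩ := ih _ (by have := dist_le q; omega) hyK hw hIy hIw ⟨q⟩ rfl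
    refine ⟨.cons (tsGraph_adj_insert hu hyK huy hIu hIy) p, ?_⟩
    have := dist_le q
    rw [Walk.length_cons]
    omega

end ClawFree

theorem exists_exchange_of_isAcyclic_symmDiff {V : Type} [Finite V] {G : SimpleGraph V}
    {I J : Set V} (hJ : Indep G J) (hcard : I.ncard = J.ncard) (hne : (I \ J).Nonempty)
    (hacyc : (G.induce (symmDiff I J)).IsAcyclic) :
    ∃ u ∈ I \ J, ∃ w ∈ J \ I, ∀ x ∈ I, G.Adj w x → x = u := by
  classical
  have := Fintype.ofFinite V
  have hdiff := (Set.ncard_eq_ncard_iff_ncard_sdiff_eq_ncard_sdiff (s := I) (t := J)).mp hcard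
  set S := symmDiff I J
  let B : Finset S := univ.filter (·.1 ∈ J)
  have hB : (G.induce S).IsIndepSet B := fun x hx y hy _ =>
    hJ x (mem_filter.mp hx).2 y (mem_filter.mp hy).2
  have hBcard : #B = (J \ I).ncard := by
    have : Subtype.val '' (B : Set S) = J \ I := by
      ext x; by_cases hx : x ∈ J <;> simp [B, S, Set.mem_symmDiff, hx]
    rw [← this, Set.ncard_image_of_injective _ Subtype.val_injective, Set.ncard_coe_finset]
  have hScard : Fintype.card S = (I \ J).ncard + (J \ I).ncard := by
    rw [← Nat.card_eq_fintype_card, Nat.card_coe_set_eq]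
    exact Set.ncard_union_eq disjoint_sdiff_sdiff
  obtain ⟨⟨w, hwS⟩, hwB, hdeg⟩ := hacyc.exists_degree_le_one_of_isIndepSet hB (by omega)
    (card_pos.mp (by have := (Set.ncard_pos (s := I \ J)).mpr hne; omega))
  have hwJ : w ∈ J := (mem_filter.mp hwB).2
  have hw : w ∈ J \ I := by simpa [S, Set.mem_symmDiff, hwJ] using hwS
  have hxS : ∀ x ∈ I, G.Adj w x → x ∈ S := fun x hx hwx =>
    .inl ⟨hx, fun hxJ => hJ w hwJ x hxJ hwx⟩
  have huniq : ∀ x ∈ I, ∀ x' ∈ I, G.Adj w x → G.Adj w x' → x = x' := by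
    intro x hx x' hx' hwx hwx'
    have := card_le_one.mp hdeg ⟨x, hxS x hx hwx⟩ (by simpa using hwx) ⟨x', hxS x' hx' hwx'⟩
      (by simpa using hwx')
    exact congrArg Subtype.val this
  by_cases hnbr : ∃ u ∈ I, G.Adj w u
  · obtain ⟨u, hu, hwu⟩ := hnbr
    exact ⟨u, hxS u hu hwu |>.resolve_right (fun h => h.2 hu), w, hw,
      fun x hx hwx => huniq x hx u hu hwx hwu⟩
  · push Not at hnbr
    obtain ⟨u, hu⟩ := hne
    exact ⟨u, hu, w, hw, fun x hx hwx => absurd hwx (hnbr x hx)⟩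

theorem ClawFree.exists_tsWalk_of_isAcyclic_symmDiff {V : Type} [Finite V] {G : SimpleGraph V}
    (hG : ClawFree G) (hconn : G.Connected) {I J : Set V} (hI : Indep G I) (hJ : Indep G J)
    (hcard : I.ncard = J.ncard) (hacyc : (G.induce (symmDiff I J)).IsAcyclic) :
    ∃ p : (tsGraph G).Walk I J, p.length ≤ 2 * (I \ J).ncard * G.diam := by
  obtain ⟨n, hn⟩ : ∃ n, (I \ J).ncard = n := ⟨_, rfl⟩
  induction n generalizing I with
  | zero =>
    obtain rfl : I = J := Set.eq_of_subset_of_ncard_le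
      (Set.sdiff_eq_empty.mp ((Set.ncard_eq_zero (s := I \ J)).mp hn)) hcard.ge
    exact ⟨.nil, Nat.zero_le _⟩
  | succ n ih =>
    obtain ⟨u, hu, w, hw, hwu⟩ := exists_exchange_of_isAcyclic_symmDiff hJ hcard
      (Set.nonempty_of_ncard_ne_zero (by omega)) hacyc
    have hIu : insert u (I \ {u}) = I := Set.insert_sdiff_self_of_mem hu.1
    have hIw : Indep G (insert w (I \ {u})) := indep_insert.mpr
      ⟨hI.mono Set.sdiff_subset, fun x hx hwx => hx.2 (hwu x hx.1 hwx)⟩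
    obtain ⟨p₁, hp₁⟩ := hG.exists_tsWalk_insert (by simp) (fun h => hw.2 h.1) (by rwa [hIu]) hIw
      (hconn u w)
    have hdiff : insert w (I \ {u}) \ J = (I \ J) \ {u} := by
      ext x; simp only [Set.mem_sdiff, Set.mem_insert_iff, Set.mem_singleton_iff]; grind
    have hsub : symmDiff (insert w (I \ {u})) J ⊆ symmDiff I J := by
      intro x; simp only [Set.mem_symmDiff, Set.mem_sdiff, Set.mem_insert_iff,
        Set.mem_singleton_iff]; grind
    have hn' : (insert w (I \ {u}) \ J).ncard = n := by
      rw [hdiff, Set.ncard_sdiff_singleton_of_mem hu, hn, Nat.add_sub_cancel]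
    obtain ⟨p₂, hp₂⟩ := ih hIw (by rw [Set.ncard_exchange hw.2 hu.1, hcard])
      (hacyc.embedding (G.induceHomOfLE hsub)) hn'
    rw [hn'] at hp₂
    refine ⟨(p₁.copy hIu rfl).append p₂, ?_⟩
    have := hconn.nonempty
    have : G.dist u w ≤ G.diam := dist_le_diam (connected_iff_ediam_ne_top.mp hconn)
    have : 2 * (n + 1) * G.diam = 2 * n * G.diam + 2 * G.diam := by ring
    rw [Walk.length_append, Walk.length_copy, hn]
    omega

theorem stmt_5_general {V : Type} [Fintype V] (G : SimpleGraph V)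
    (hconn : G.Connected) (hcf : ClawFree G) (d : ℕ) (hd : G.diam = d)
    (I J : Set V) (hI : Indep G I) (hJ : Indep G J) (hcard : I.ncard = J.ncard)
    (hacyc : (G.induce (symmDiff I J)).IsAcyclic) :
    ∃ (m : ℕ) (f : ℕ → Set V), f 0 = I ∧ f m = J ∧
      (∀ i < m, TSStep G (f i) (f (i+1))) ∧ m ≤ 2 * (I \ J).ncard * d := by
  obtain ⟨p, hp⟩ := hcf.exists_tsWalk_of_isAcyclic_symmDiff hconn hI hJ hcard hacyc
  exact ⟨p.length, p.getVert, p.getVert_zero, p.getVert_length,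
    fun _ hi => p.adj_getVert_succ hi, hd ▸ hp⟩

/-- If `G[I △ J]` is acyclic in a connected claw-free graph of diameter `d`, then there
is a TS-sequence from `I` to `J` of length at most `2 · |I \ J| · d`. -/
theorem stmt_5 {V : Type} [Fintype V] [DecidableEq V] (G : SimpleGraph V)
    (hconn : G.Connected) (hcf : ClawFree G) (d : ℕ) (hd : G.diam = d)
    (I J : Set V) (hI : Indep G I) (hJ : Indep G J) (hcard : I.ncard = J.ncard)
    (hacyc : (G.induce (symmDiff I J)).IsAcyclic) :
    ∃ (m : ℕ) (f : ℕ → Set V), f 0 = I ∧ f m = J ∧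
      (∀ i < m, TSStep G (f i) (f (i+1))) ∧ m ≤ 2 * (I \ J).ncard * d :=
  stmt_5_general G hconn hcf d hd I J hI hJ hcard hacyc
end

section
/- Let G be a connected claw-free graph and let I and J be independent sets with |I| = |J| = k. Then I and J lie in the same component of the token sliding graph TS_k(G) if and only if they lie in the same component of the token jumping graph TJ_k(G). -/
open SimpleGraph

/-!
A token jump `I ↦ I - u + v` is simulated by slides, by induction on `dist u v`. Let `a` be the
neighbour of `u` on a shortest `u`–`v` path and `b` the next vertex. If `a` has no neighbour in
`I - u`, slide `u` to `a` and continue from `a`. Otherwise let `w ∈ I - u` be such a neighbour;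
as `u, w, b` are neighbours of `a` and `u` is adjacent to neither `w` nor `b`, claw-freeness forces
`w = b` or `w ∼ b`. So `w` is strictly closer to `v` than `u` is, and `dist u w = 2 < dist u v`:
first jump `w` to `v`, then `u` to `w`, both by induction.
-/

/-- The set `I - u + v`. -/
def moveToken {V : Type} (I : Set V) (u v : V) : Set V :=
  insert v (I \ {u})

section Reconfiguration

variable {V : Type} {G : SimpleGraph V}

lemma moveToken_moveToken_of_notMem {I : Set V} {u a v : V} (ha : a ∉ I) :
    moveToken (moveToken I u a) a v = moveToken I u v := by
  ext x
  simp only [moveToken, Set.mem_insert_iff, Set.mem_sdiff, Set.mem_singleton_iff]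
  grind

lemma moveToken_moveToken_swap {I : Set V} {u v w : V} (hw : w ∈ I) (hwu : w ≠ u)
    (hvu : v ≠ u) : moveToken (moveToken I w v) u w = moveToken I u v := by
  ext x
  simp only [moveToken, Set.mem_insert_iff, Set.mem_sdiff, Set.mem_singleton_iff]
  grind

lemma eq_moveToken_of_sdiff {I J : Set V} {u v : V} (hIJ : I \ J = {u}) (hJI : J \ I = {v}) :
    J = moveToken I u v := by
  simp only [Set.ext_iff, moveToken, Set.mem_insert_iff, Set.mem_sdiff,
    Set.mem_singleton_iff] at *
  grind

lemma Indep.moveToken {I : Set V} {u v : V} (hI : Indep G I)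
    (hv : ∀ w ∈ I, w ≠ u → ¬G.Adj v w) : Indep G (moveToken I u v) := by
  rintro x (rfl | ⟨hx, hxu⟩) y (rfl | ⟨hy, hyu⟩)
  · exact G.loopless.irrefl _
  · exact hv y hy hyu
  · exact fun h => hv x hx hxu h.symm
  · exact hI x hx y hy

lemma tsStep_moveToken {I : Set V} {u v : V} (hI : Indep G I) (hJ : Indep G (moveToken I u v))
    (hu : u ∈ I) (hv : v ∉ I) (huv : G.Adj u v) : TSStep G I (moveToken I u v) := by
  refine ⟨hI, hJ, u, v, huv, ?_, ?_⟩ <;>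
  · ext x
    simp only [moveToken, Set.mem_sdiff, Set.mem_insert_iff, Set.mem_singleton_iff]
    grind

lemma TSStep.tjStep {I J : Set V} (h : TSStep G I J) : TJStep G I J :=
  let ⟨hI, hJ, u, v, _, hIJ, hJI⟩ := h
  ⟨hI, hJ, u, v, hIJ, hJI⟩

lemma SimpleGraph.Connected.exists_adj_dist_add_one_eq (hconn : G.Connected) {u v : V}
    (huv : u ≠ v) : ∃ a, G.Adj u a ∧ G.dist a v + 1 = G.dist u v := by
  obtain ⟨p, hp⟩ := hconn.exists_walk_length_eq_dist u v
  cases p with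
  | nil => exact absurd rfl huv
  | @cons _ a _ hua q =>
    refine ⟨a, hua, le_antisymm ?_ ?_⟩
    · simpa [← hp] using dist_le q
    · calc G.dist u v ≤ G.dist u a + G.dist a v := hconn.dist_triangle
        _ = G.dist a v + 1 := by rw [dist_eq_one_iff_adj.mpr hua, add_comm]

lemma SimpleGraph.Adj.dist_le_dist_add_one {u a : V} (h : G.Adj u a) (v : V) :
    G.dist u v ≤ G.dist a v + 1 := by
  rw [dist_comm, dist_comm (u := a)]
  have := h.symm.diff_dist_adj (u := v)
  omega

lemma ClawFree.eq_or_adj_s6 {a u w b : V} (hcf : ClawFree G) (hau : G.Adj a u) (haw : G.Adj a w)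
    (hab : G.Adj a b) (huw : ¬G.Adj u w) (hub : ¬G.Adj u b) (huw' : u ≠ w) (hub' : u ≠ b) :
    w = b ∨ G.Adj w b := by
  by_contra! h
  exact hcf ⟨a, u, w, b, hau, haw, hab, huw', hub', h.1, huw, hub, h.2⟩

lemma ClawFree.two_lt_dist_and_dist_lt (hcf : ClawFree G) (hconn : G.Connected) {u a w v : V}
    (hua : G.Adj u a) (had : G.dist a v + 1 = G.dist u v) (haw : G.Adj a w) (huw : ¬G.Adj u w)
    (huw' : u ≠ w) (hwv : w ≠ v) (hwv' : ¬G.Adj w v) :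
    2 < G.dist u v ∧ G.dist w v < G.dist u v := by
  have hav : a ≠ v := by rintro rfl; exact hwv' haw.symm
  obtain ⟨b, hab, hbd⟩ := hconn.exists_adj_dist_add_one_eq hav
  have hub : u ≠ b := by rintro rfl; omega
  have hub' : ¬G.Adj u b := fun h => by have := h.dist_le_dist_add_one v; omega
  have hwb := hcf.eq_or_adj_s6 hua.symm haw hab huw hub' huw' hub
  have hbv : b ≠ v := by rintro rfl; exact hwb.elim hwv hwv'
  have := hconn.pos_dist_of_ne hbv
  rcases hwb with rfl | h
  · omega
  · have := h.dist_le_dist_add_one v; omega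

theorem tsReach_moveToken (hconn : G.Connected) (hcf : ClawFree G) {I : Set V} {u v : V}
    (hI : Indep G I) (hJ : Indep G (moveToken I u v)) (hu : u ∈ I) (hv : v ∉ I) :
    TSReach G I (moveToken I u v) := by
  induction hd : G.dist u v using Nat.strong_induction_on generalizing I u v with
  | _ d ih =>
  have huv : u ≠ v := fun h => hv (h ▸ hu)
  have hvJ : ∀ x ∈ I, x ≠ u → ¬G.Adj v x := fun x hx hxu =>
    hJ v (.inl rfl) x (.inr ⟨hx, hxu⟩)
  obtain ⟨a, hua, had⟩ := hconn.exists_adj_dist_add_one_eq huv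
  have haI : a ∉ I := fun ha => hI u hu a ha hua
  by_cases hav : a = v
  · subst hav
    exact .single (tsStep_moveToken hI hJ hu hv hua)
  by_cases hw : ∃ w ∈ I, w ≠ u ∧ G.Adj a w
  · obtain ⟨w, hwI, hwu, haw⟩ := hw
    have hwv : w ≠ v := fun h => hv (h ▸ hwI)
    obtain ⟨hd2, hwd⟩ := hcf.two_lt_dist_and_dist_lt hconn hua had haw (hI u hu w hwI)
      (Ne.symm hwu) hwv fun h => hvJ w hwI hwu h.symm
    have huv' : ¬G.Adj v u := fun h => by
      have := dist_eq_one_iff_adj.mpr h.symm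
      omega
    have hud : G.dist u w < d := by
      have := hua.dist_le_dist_add_one w
      rw [dist_eq_one_iff_adj.mpr haw] at this
      omega
    have hI₁ : Indep G (moveToken I w v) := hI.moveToken fun x hx _ => by
      rcases eq_or_ne x u with rfl | hxu
      · exact huv'
      · exact hvJ x hx hxu
    have jump_w := ih _ (hd ▸ hwd) hI hI₁ hwI hv rfl
    have jump_u := ih _ hud (u := u) (v := w) hI₁
      (by rwa [moveToken_moveToken_swap hwI hwu (Ne.symm huv)]) (.inr ⟨hu, Ne.symm hwu⟩)
      (by simp [moveToken, hwv]) rfl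
    rw [moveToken_moveToken_swap hwI hwu (Ne.symm huv)] at jump_u
    exact jump_w.trans jump_u
  · push Not at hw
    have hI₁ : Indep G (moveToken I u a) := hI.moveToken hw
    have slide_u := tsStep_moveToken hI hI₁ hu haI hua
    have jump_a := ih _ (by omega) (u := a) (v := v) hI₁
      (by rwa [moveToken_moveToken_of_notMem haI]) (.inl rfl)
      (by simp [moveToken, Ne.symm hav, hv]) rfl
    rw [moveToken_moveToken_of_notMem haI] at jump_a
    exact .head slide_u jump_a

theorem TJStep.tsReach (hconn : G.Connected) (hcf : ClawFree G) {I J : Set V}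
    (h : TJStep G I J) : TSReach G I J := by
  obtain ⟨hI, hJ, u, v, hIJ, hJI⟩ := h
  have hu : u ∈ I \ J := hIJ ▸ rfl
  have hv : v ∈ J \ I := hJI ▸ rfl
  obtain rfl := eq_moveToken_of_sdiff hIJ hJI
  exact tsReach_moveToken hconn hcf hI hJ hu.1 hv.2

end Reconfiguration

theorem stmt_6_general {V : Type} (G : SimpleGraph V)
    (hconn : G.Connected) (hcf : ClawFree G)
    (I J : Set V) :
    TSReach G I J ↔ TJReach G I J :=
  ⟨Relation.ReflTransGen.mono (fun _ _ => TSStep.tjStep) I J,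
    Relation.ReflTransGen.lift' id (fun _ _ => TJStep.tsReach hconn hcf) I J⟩

/-- In a connected claw-free graph, token sliding reachability coincides with
token jumping reachability. -/
theorem stmt_6 {V : Type} [Fintype V] [DecidableEq V] (G : SimpleGraph V)
    (hconn : G.Connected) (hcf : ClawFree G)
    (I J : Set V) (hI : Indep G I) (hJ : Indep G J) (hcard : I.ncard = J.ncard) :
    TSReach G I J ↔ TJReach G I J :=
  stmt_6_general G hconn hcf I J
end

section
/- Let G be a claw-free graph, I an independent set, and C an I-bad cycle with I-bipartition [A, B]. Suppose I_0, …, I_m is a TS-sequence with I_0 = I. Then this sequence contains a resolving sequence for C (i.e., for some i, G[I_i ∪ B] contains no cycle) if and only if it contains a move u → v with u ∈ N_2(B) and v ∈ N_1(B). -/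
open SimpleGraph

/-! Call a cycle through all of `B` whose vertices alternate between `J` and `B` an alternating
cycle for `(B, J)` (`AltCycle G B J k`, of length `2k`); the bad cycle `c` is one for `(cycB c, I)`. Claw-freeness pins down
neighbourhoods along such a cycle: the two cycle-neighbours of a cycle vertex are its only
neighbours in any independent set containing them. Hence a move `u → v` either keeps an
alternating cycle (`u` is off the cycle, or `v` sees both cycle-neighbours of `u` and replaces
it) or is a move `N₂(B) → N₁(B)`: a `v ∈ B` would be adjacent to a remaining token, and a `v`
seeing neither cycle-neighbour of `u` would make `u` the centre of a claw. While an alternating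
cycle exists, `G[J ∪ B]` contains it; right after the first `N₂(B) → N₁(B)` move, `G[J' ∪ B]` is
a path with one pendant vertex plus isolated vertices, hence a forest. -/

lemma Set.mem_of_sdiff_eq_singleton {α : Type*} {s t : Set α} {a x : α} (h : s \ t = {a})
    (hx : x ∈ s) (hne : x ≠ a) : x ∈ t := by
  by_contra hxt
  exact hne (h ▸ ⟨hx, hxt⟩ : x ∈ ({a} : Set α))

namespace ZMod

lemma even_val_add_one_iff {N : ℕ} (hN : Even N) (j : ZMod N) :
    Even (j + 1).val ↔ ¬Even j.val := by
  rcases Nat.eq_zero_or_pos N with rfl | hpos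
  · revert j
    show ∀ j : ℤ, Even (j + 1).natAbs ↔ ¬Even j.natAbs
    simp [Int.natAbs_even]
  have : NeZero N := ⟨hpos.ne'⟩
  rw [val_add, val_one'' (by rintro rfl; exact Nat.not_even_one hN),
    Nat.even_iff, Nat.even_iff, Nat.mod_mod_of_dvd _ (even_iff_two_dvd.mp hN)]
  omega

lemma even_val_sub_one_iff {N : ℕ} (hN : Even N) (j : ZMod N) :
    Even (j - 1).val ↔ ¬Even j.val := by
  rw [← not_iff_not, ← even_val_add_one_iff hN, sub_add_cancel, not_not]

lemma add_one_ne_self {N : ℕ} (hN : N ≠ 1) (j : ZMod N) : j + 1 ≠ j := by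
  have : Nontrivial (ZMod N) := nontrivial_iff.mpr hN
  simp

lemma sub_one_ne_add_one {N : ℕ} (hN : 2 < N) (j : ZMod N) : j - 1 ≠ j + 1 := by
  intro h
  have h2 : ((2 : ℕ) : ZMod N) = 0 := by push_cast; linear_combination -h
  exact absurd (Nat.le_of_dvd two_pos ((natCast_eq_zero_iff 2 N).mp h2)) (by omega)

lemma val_add_one {N : ℕ} [NeZero N] (a : ZMod N) : (a + 1).val = (a.val + 1) % N := by
  rw [val_add, val_one_eq_one_mod, Nat.add_mod_mod]

lemma val_add_one_of_ne_zero {N : ℕ} [NeZero N] {a : ZMod N} (h : a + 1 ≠ 0) :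
    (a + 1).val = a.val + 1 := by
  rw [← val_ne_zero, val_add_one] at h
  rw [val_add_one]
  rcases (Nat.lt_or_ge (a.val + 1) N).symm with hN | hN
  · rw [show a.val + 1 = N by have := a.val_lt; omega, Nat.mod_self] at h
    exact absurd rfl h
  · exact Nat.mod_eq_of_lt hN

lemma val_add_one_of_eq_zero {N : ℕ} [NeZero N] {a : ZMod N} (h : a + 1 = 0) :
    a.val + 1 = N := by
  rw [← val_eq_zero, val_add_one] at h
  have := a.val_lt
  rcases Nat.lt_or_ge (a.val + 1) N with hN | hN
  · rw [Nat.mod_eq_of_lt hN] at h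
    omega
  · omega

lemma val_sub_add_one {N : ℕ} [NeZero N] {j j₀ : ZMod N} (h : j + 1 ≠ j₀) :
    (j + 1 - j₀).val = (j - j₀).val + 1 := by
  rw [show j + 1 - j₀ = j - j₀ + 1 by ring]
  exact val_add_one_of_ne_zero fun h' => h (by linear_combination h')

end ZMod

namespace SimpleGraph

lemma not_isAcyclic_of_cycle {W : Type*} {H : SimpleGraph W} {N : ℕ} (hN : 3 ≤ N)
    (z : ZMod N → W) (hz : Function.Injective z) (hadj : ∀ j, H.Adj (z j) (z (j + 1))) :
    ¬H.IsAcyclic := by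
  obtain ⟨M, rfl⟩ : ∃ M, N = M + 3 := ⟨N - 3, by omega⟩
  intro hacyc
  refine isAcyclic_iff_free_cycleGraph.mp hacyc (M + 3) hN ⟨Hom.toCopy ⟨z, ?_⟩ hz⟩
  intro u v huv
  rcases cycleGraph_adj.mp huv with h | h
  · rw [← sub_add_cancel u v, h, add_comm]
    exact (hadj v).symm
  · rw [← sub_add_cancel v u, h, add_comm]
    exact hadj u

/-- On a cycle, both neighbours of a vertex of maximal grade have grade one less, so they
coincide. -/
lemma isAcyclic_of_grading {W : Type*} {H : SimpleGraph W} (φ : W → ℕ)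
    (hadj : ∀ x y, H.Adj x y → φ x + 1 = φ y ∨ φ y + 1 = φ x)
    (hinj : Set.InjOn φ H.support) : H.IsAcyclic := by
  classical
  intro v p hp
  obtain ⟨x, hx, hmax⟩ := p.support.toFinset.exists_max_image φ ⟨v, by simp⟩
  rw [List.mem_toFinset] at hx
  set q := p.rotate x hx
  have hq : q.IsCycle := hp.rotate hx
  have below : ∀ y ∈ q.support, H.Adj x y → φ y + 1 = φ x := fun y hy hxy => by
    have := hmax y (List.mem_toFinset.mpr ((Walk.mem_support_rotate_iff p x hx).mp hy))
    rcases hadj x y hxy with h | h <;> omega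
  have hsnd := Walk.adj_snd hq.not_nil
  have hpen := (Walk.adj_penultimate hq.not_nil).symm
  refine hq.snd_ne_penultimate (hinj ⟨x, hsnd.symm⟩ ⟨x, hpen.symm⟩ ?_)
  have h₁ : φ q.snd + 1 = φ x := below _ (q.getVert_mem_support _) hsnd
  have h₂ : φ q.penultimate + 1 = φ x := below _ (q.getVert_mem_support _) hpen
  omega

lemma isAcyclic_induce_of_grading {V : Type*} {G : SimpleGraph V} {S T : Set V} (φ : V → ℕ)
    (hT : ∀ x ∈ S, ∀ y ∈ S, G.Adj x y → x ∈ T) (hinj : Set.InjOn φ T)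
    (hadj : ∀ x ∈ S, ∀ y ∈ S, G.Adj x y → φ x + 1 = φ y ∨ φ y + 1 = φ x) :
    (G.induce S).IsAcyclic := by
  refine isAcyclic_of_grading (fun x : S => φ x) (fun x y h => hadj x x.2 y y.2 h) ?_
  rintro x ⟨y, hxy⟩ x' ⟨y', hxy'⟩ h
  exact Subtype.ext (hinj (hT _ x.2 _ y.2 hxy) (hT _ x'.2 _ y'.2 hxy') h)

end SimpleGraph

section ClawFree

variable {V : Type} {G : SimpleGraph V}

lemma ClawFree.eq_or_eq_of_adj (hcf : ClawFree G) {x a b c : V} (hab : a ≠ b)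
    (hxa : G.Adj x a) (hxb : G.Adj x b) (hxc : G.Adj x c)
    (nab : ¬G.Adj a b) (nac : ¬G.Adj a c) (nbc : ¬G.Adj b c) : c = a ∨ c = b := by
  by_contra! h
  exact hcf ⟨x, a, b, c, hxa, hxb, hxc, hab, h.1.symm, h.2.symm, nab, nac, nbc⟩

lemma ClawFree.eq_or_eq_of_indep (hcf : ClawFree G) {S : Set V} (hS : Indep G S) {x a b c : V}
    (ha : a ∈ S) (hb : b ∈ S) (hc : c ∈ S) (hab : a ≠ b)
    (hxa : G.Adj x a) (hxb : G.Adj x b) (hxc : G.Adj x c) : c = a ∨ c = b :=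
  hcf.eq_or_eq_of_adj hab hxa hxb hxc (hS a ha b hb) (hS a ha c hc) (hS b hb c hc)

lemma nbrsIn_eq_singleton {B : Set V} {v a a' : V} (h : ∀ b ∈ B, G.Adj v b → b = a ∨ b = a')
    (ha : a ∈ B) (hva : G.Adj v a) (hva' : ¬G.Adj v a') : nbrsIn G B v = {a} := by
  ext b
  refine ⟨fun ⟨hb, hvb⟩ => (h b hb hvb).resolve_right ?_, fun hb => hb ▸ ⟨ha, hva⟩⟩
  rintro rfl
  exact hva' hvb

lemma eq_of_mem_Nset_one {B : Set V} {v a a' : V} (hv : v ∈ Nset G B 1) (ha : a ∈ B)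
    (ha' : a' ∈ B) (hva : G.Adj v a) (hva' : G.Adj v a') : a = a' := by
  obtain ⟨c, hc⟩ := Set.ncard_eq_one.mp hv.2
  have h : a ∈ nbrsIn G B v := ⟨ha, hva⟩
  have h' : a' ∈ nbrsIn G B v := ⟨ha', hva'⟩
  rw [hc] at h h'
  exact h.trans h'.symm

end ClawFree

structure AltCycle {V : Type} (G : SimpleGraph V) (B J : Set V) (k : ℕ) where
  toFun : ZMod (2 * k) → V
  two_le : 2 ≤ k
  injective : Function.Injective toFun
  adj : ∀ j, G.Adj (toFun j) (toFun (j + 1))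
  mem_of_even : ∀ j, Even j.val → toFun j ∈ J
  mem_of_odd : ∀ j, ¬Even j.val → toFun j ∈ B
  subset_range : B ⊆ Set.range toFun

def HasAltCycle {V : Type} (G : SimpleGraph V) (B J : Set V) : Prop :=
  ∃ k, Nonempty (AltCycle G B J k)

def IsResolvingMove {V : Type} (G : SimpleGraph V) (B J J' : Set V) : Prop :=
  ∃ u v : V, J \ J' = {u} ∧ J' \ J = {v} ∧ u ∈ Nset G B 2 ∧ v ∈ Nset G B 1

namespace AltCycle

variable {V : Type} {G : SimpleGraph V} {B J J' : Set V} {k : ℕ}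

instance : CoeFun (AltCycle G B J k) (fun _ => ZMod (2 * k) → V) := ⟨toFun⟩

variable (z : AltCycle G B J k) {j j₀ : ZMod (2 * k)}

lemma adj_sub_one (j : ZMod (2 * k)) : G.Adj (z (j - 1)) (z j) := by
  simpa using z.adj (j - 1)

lemma sub_one_ne_add_one (j : ZMod (2 * k)) : z (j - 1) ≠ z (j + 1) :=
  z.injective.ne (ZMod.sub_one_ne_add_one (by have := z.two_le; omega) j)

lemma mem_add_one_of_even (hj : Even j.val) : z (j + 1) ∈ B :=
  z.mem_of_odd _ ((ZMod.even_val_add_one_iff (even_two_mul k) j).not.mpr (not_not.mpr hj))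

lemma mem_sub_one_of_even (hj : Even j.val) : z (j - 1) ∈ B :=
  z.mem_of_odd _ ((ZMod.even_val_sub_one_iff (even_two_mul k) j).not.mpr (not_not.mpr hj))

lemma mem_add_one_of_odd (hj : ¬Even j.val) : z (j + 1) ∈ J :=
  z.mem_of_even _ ((ZMod.even_val_add_one_iff (even_two_mul k) j).mpr hj)

lemma mem_sub_one_of_odd (hj : ¬Even j.val) : z (j - 1) ∈ J :=
  z.mem_of_even _ ((ZMod.even_val_sub_one_iff (even_two_mul k) j).mpr hj)

lemma odd_of_mem (hB : Indep G B) (hj : z j ∈ B) : ¬Even j.val := fun he =>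
  hB _ hj _ (z.mem_add_one_of_even he) (z.adj j)

lemma even_of_mem (hJ : Indep G J) (hj : z j ∈ J) : Even j.val := by
  by_contra ho
  exact hJ _ hj _ (z.mem_add_one_of_odd ho) (z.adj j)

lemma exists_odd_eq (hB : Indep G B) {b : V} (hb : b ∈ B) :
    ∃ j, ¬Even (j : ZMod (2 * k)).val ∧ z j = b := by
  obtain ⟨j, rfl⟩ := z.subset_range hb
  exact ⟨j, z.odd_of_mem hB hb, rfl⟩

lemma notMem_range_of_mem_sdiff {v : V} (hv : v ∈ J' \ J) (hvB : v ∉ B) :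
    v ∉ Set.range z := by
  rintro ⟨j, rfl⟩
  by_cases hj : Even j.val
  exacts [hv.2 (z.mem_of_even j hj), hvB (z.mem_of_odd j hj)]

lemma notMem_of_odd (hJ' : Indep G J') {u : V} (hsub : ∀ x ∈ J, x ≠ u → x ∈ J')
    (hj : ¬Even j.val) : z j ∉ J' := by
  intro hjJ'
  by_cases hm : z (j - 1) = u
  · refine hJ' _ hjJ' _ (hsub _ (z.mem_add_one_of_odd hj) fun hp => ?_) (z.adj j)
    exact z.sub_one_ne_add_one j (hm.trans hp.symm)
  · exact hJ' _ (hsub _ (z.mem_sub_one_of_odd hj) hm) _ hjJ' (z.adj_sub_one j)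

lemma eq_or_eq_of_adj (hcf : ClawFree G) {S : Set V} (hS : Indep G S) {x : V}
    (hm : z (j - 1) ∈ S) (hp : z (j + 1) ∈ S) (hx : x ∈ S) (hadj : G.Adj (z j) x) :
    x = z (j - 1) ∨ x = z (j + 1) :=
  hcf.eq_or_eq_of_indep hS hm hp hx (z.sub_one_ne_add_one j) (z.adj_sub_one j).symm (z.adj j) hadj

lemma mem_Nset_two (hcf : ClawFree G) (hB : Indep G B) (hj : Even j.val) :
    z j ∈ Nset G B 2 := by
  have hm := z.mem_sub_one_of_even hj
  have hp := z.mem_add_one_of_even hj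
  have hnbrs : nbrsIn G B (z j) = {z (j - 1), z (j + 1)} := by
    ext b
    refine ⟨fun ⟨hb, hadj⟩ => z.eq_or_eq_of_adj hcf hB hm hp hb hadj, ?_⟩
    rintro (rfl | rfl)
    exacts [⟨hm, (z.adj_sub_one j).symm⟩, ⟨hp, z.adj j⟩]
  refine ⟨fun hjB => z.odd_of_mem hB hjB hj, ?_⟩
  rw [hnbrs, Set.ncard_pair (z.sub_one_ne_add_one j)]

lemma mem_range_of_adj (hcf : ClawFree G) (hB : Indep G B) (hJ : Indep G J) {x b : V}
    (hx : x ∈ J) (hb : b ∈ B) (hadj : G.Adj x b) : x ∈ Set.range z := by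
  obtain ⟨j, hj, rfl⟩ := z.exists_odd_eq hB hb
  rcases z.eq_or_eq_of_adj hcf hJ (z.mem_sub_one_of_odd hj) (z.mem_add_one_of_odd hj) hx
    hadj.symm with h | h <;> exact ⟨_, h.symm⟩

/-- Any other `B`-vertex `z j` would be the centre of a claw with leaves `z (j - 1)`,
`z (j + 1)` and `v`, all in `J'`. -/
lemma eq_or_eq_of_adj_of_notMem_range (hcf : ClawFree G) (hB : Indep G B) (hJ' : Indep G J')
    (hsub : ∀ x ∈ J, x ≠ z j₀ → x ∈ J') {v b : V} (hv : v ∈ J') (hvr : v ∉ Set.range z)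
    (hb : b ∈ B) (hadj : G.Adj v b) : b = z (j₀ - 1) ∨ b = z (j₀ + 1) := by
  obtain ⟨j, hj, rfl⟩ := z.exists_odd_eq hB hb
  by_cases hm : z (j - 1) = z j₀
  · exact Or.inr (by rw [← z.injective hm, sub_add_cancel])
  by_cases hp : z (j + 1) = z j₀
  · exact Or.inl (by rw [← z.injective hp, add_sub_cancel_right])
  rcases z.eq_or_eq_of_adj hcf hJ' (hsub _ (z.mem_sub_one_of_odd hj) hm)
    (hsub _ (z.mem_add_one_of_odd hj) hp) hv hadj.symm with h | h <;>
    exact absurd ⟨_, h.symm⟩ hvr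

def ofMemEven (h : ∀ j, Even j.val → z j ∈ J') : AltCycle G B J' k :=
  { z with mem_of_even := h }

def replace (hB : Indep G B) (hj₀ : Even j₀.val) (hsub : ∀ j, j ≠ j₀ → Even j.val → z j ∈ J')
    {v : V} (hv : v ∈ J') (hvr : v ∉ Set.range z) (hm : G.Adj (z (j₀ - 1)) v)
    (hp : G.Adj v (z (j₀ + 1))) : AltCycle G B J' k where
  toFun := Function.update z j₀ v
  two_le := z.two_le
  injective := by
    intro a b hab
    by_cases ha : a = j₀ <;> by_cases hb : b = j₀
    · rw [ha, hb]
    all_goals simp only [Function.update_apply, ha, hb, if_true, if_false] at hab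
    · exact absurd ⟨b, hab.symm⟩ hvr
    · exact absurd ⟨a, hab⟩ hvr
    · exact z.injective hab
  adj := by
    intro j
    by_cases hj : j = j₀
    · subst hj
      rw [Function.update_self,
        Function.update_of_ne (ZMod.add_one_ne_self (by have := z.two_le; omega) j)]
      exact hp
    by_cases hj' : j + 1 = j₀
    · rw [Function.update_of_ne hj, hj', Function.update_self,
        show j = j₀ - 1 by rw [← hj', add_sub_cancel_right]]
      exact hm
    · rw [Function.update_of_ne hj, Function.update_of_ne hj']
      exact z.adj j
  mem_of_even := by
    intro j hj
    by_cases h : j = j₀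
    · simpa [h] using hv
    · simpa [h] using hsub j h hj
  mem_of_odd := by
    intro j hj
    have h : j ≠ j₀ := by rintro rfl; exact hj hj₀
    simpa [h] using z.mem_of_odd j hj
  subset_range := by
    intro b hb
    obtain ⟨j, hj, rfl⟩ := z.exists_odd_eq hB hb
    exact ⟨j, Function.update_of_ne (by rintro rfl; exact hj hj₀) _ _⟩

lemma eq_or_mem_range_of_adj (hcf : ClawFree G) (hB : Indep G B) (hJ : Indep G J)
    (hJ' : Indep G J') {v : V} (hsub' : ∀ x ∈ J', x ≠ v → x ∈ J) {x y : V} (hx : x ∈ J' ∪ B)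
    (hy : y ∈ J' ∪ B) (hxy : G.Adj x y) : x = v ∨ x ∈ Set.range z := by
  refine or_iff_not_imp_left.mpr fun hxv => ?_
  rcases hx with hx | hx
  · exact z.mem_range_of_adj hcf hB hJ (hsub' x hx hxv)
      (hy.resolve_left fun hy => hJ' _ hx _ hy hxy) hxy
  · exact z.subset_range hx

lemma exists_grade (j₀ : ZMod (2 * k)) {v : V} (hvr : v ∉ Set.range z) (c₀ : ℕ) :
    ∃ φ : V → ℕ, (∀ j, φ (z j) = (j - j₀).val) ∧ φ v = c₀ := by
  classical
  refine ⟨fun x => if x = v then c₀ else (Function.invFun z x - j₀).val, fun j => ?_, if_pos rfl⟩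
  simp only [if_neg (fun h : z j = v => hvr ⟨j, h⟩), Function.leftInverse_invFun z.injective j]

lemma injOn_grade (φ : V → ℕ) {v : V} (hφ : ∀ j, φ (z j) = (j - j₀).val)
    (hφv : φ v = 0 ∨ φ v = 2 * k) : Set.InjOn φ {x | x = v ∨ ∃ j, j ≠ j₀ ∧ z j = x} := by
  have : NeZero (2 * k) := ⟨by have := z.two_le; omega⟩
  have hv_ne : ∀ j, j ≠ j₀ → φ v ≠ φ (z j) := by
    intro j hj h
    have h0 : (j - j₀).val ≠ 0 := by rwa [ZMod.val_ne_zero, sub_ne_zero]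
    have hlt := (j - j₀).val_lt
    rw [hφ] at h
    omega
  rintro x (rfl | ⟨j, hj, rfl⟩) x' (rfl | ⟨j', hj', rfl⟩) h
  · rfl
  · exact absurd h (hv_ne j' hj')
  · exact absurd h.symm (hv_ne j hj)
  · rw [hφ, hφ] at h
    rw [sub_left_injective (ZMod.val_injective _ h)]

/-- `φ` is the position along the path `z (j₀ + 1), …, z (j₀ - 1)` that remains of the cycle
after the token on `z j₀` has left, with `v` placed next to its unique neighbour in `B`. -/
lemma grade_add_one_of_adj (φ : V → ℕ) {v : V} (hφ : ∀ j, φ (z j) = (j - j₀).val)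
    (hφv₀ : G.Adj v (z (j₀ + 1)) → φ v = 0) (hφv₁ : ¬G.Adj v (z (j₀ + 1)) → φ v = 2 * k)
    (hcf : ClawFree G) (hB : Indep G B) (hJ : Indep G J) (hsub' : ∀ x ∈ J', x ≠ v → x ∈ J)
    (hu : z j₀ ∉ J' ∪ B) (hj₀ : Even j₀.val) (hv : v ∈ Nset G B 1)
    (hnbr : ∀ b ∈ B, G.Adj v b → b = z (j₀ - 1) ∨ b = z (j₀ + 1))
    {x y : V} (hx : x ∈ B) (hy : y ∈ J') (hxy : G.Adj x y) : φ x + 1 = φ y ∨ φ y + 1 = φ x := by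
  have : NeZero (2 * k) := ⟨by have := z.two_le; omega⟩
  obtain ⟨j, hj, rfl⟩ := z.exists_odd_eq hB hx
  by_cases hyv : y = v
  · subst y
    rw [hφ]
    rcases hnbr _ hx hxy.symm with h | h <;> rw [z.injective h]
    · have hn : ¬G.Adj v (z (j₀ + 1)) := fun h' => z.sub_one_ne_add_one j₀
        (h ▸ eq_of_mem_Nset_one hv hx (z.mem_add_one_of_even hj₀) hxy.symm h')
      exact Or.inl ((hφv₁ hn).symm ▸ ZMod.val_add_one_of_eq_zero (by ring))
    · rw [hφv₀ (h ▸ hxy.symm), add_sub_cancel_left, ZMod.val_one'' (by have := z.two_le; omega)]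
      exact Or.inr rfl
  have hj_ne : j ≠ j₀ := by rintro rfl; exact hu (Or.inr hx)
  rcases z.eq_or_eq_of_adj hcf hJ (z.mem_sub_one_of_odd hj) (z.mem_add_one_of_odd hj)
    (hsub' y hy hyv) hxy with rfl | rfl
  · right
    rw [hφ, hφ, ← ZMod.val_sub_add_one (by simpa using hj_ne), sub_add_cancel]
  · left
    rw [hφ, hφ, ZMod.val_sub_add_one fun h => hu (Or.inl (by rwa [← h]))]

end AltCycle

namespace HasAltCycle

variable {V : Type} {G : SimpleGraph V} {B J J' : Set V}

lemma not_isAcyclic (h : HasAltCycle G B J) : ¬(G.induce (J ∪ B)).IsAcyclic := by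
  obtain ⟨k, ⟨z⟩⟩ := h
  have hmem : ∀ j, z j ∈ J ∪ B := fun j => by
    by_cases hj : Even j.val
    exacts [Or.inl (z.mem_of_even j hj), Or.inr (z.mem_of_odd j hj)]
  exact not_isAcyclic_of_cycle (by have := z.two_le; omega) (fun j => (⟨z j, hmem j⟩ : ↥(J ∪ B)))
    (fun a b h => z.injective (congrArg Subtype.val h)) fun j => z.adj j

lemma of_tsStep (hcf : ClawFree G) (hB : Indep G B) (h : HasAltCycle G B J)
    (hstep : TSStep G J J') (hres : ¬IsResolvingMove G B J J') : HasAltCycle G B J' := by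
  obtain ⟨k, ⟨z⟩⟩ := h
  obtain ⟨hJ, hJ', u, v, huv, hd₁, hd₂⟩ := hstep
  have hsub : ∀ x ∈ J, x ≠ u → x ∈ J' := fun x => Set.mem_of_sdiff_eq_singleton hd₁
  have hu : u ∈ J \ J' := hd₁.symm ▸ rfl
  have hv : v ∈ J' \ J := hd₂.symm ▸ rfl
  by_cases hur : u ∈ Set.range z
  swap
  · exact ⟨k, ⟨z.ofMemEven fun j hj => hsub _ (z.mem_of_even j hj) fun h => hur ⟨j, h⟩⟩⟩
  obtain ⟨j₀, rfl⟩ := hur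
  have hj₀ : Even j₀.val := z.even_of_mem hJ hu.1
  have hvB : v ∉ B := fun hb => by
    obtain ⟨j, hj, rfl⟩ := z.exists_odd_eq hB hb
    exact z.notMem_of_odd hJ' hsub hj hv.1
  have hvr := z.notMem_range_of_mem_sdiff hv hvB
  have hnbr : ∀ b ∈ B, G.Adj v b → b = z (j₀ - 1) ∨ b = z (j₀ + 1) := fun b =>
    z.eq_or_eq_of_adj_of_notMem_range hcf hB hJ' hsub hv.1 hvr
  have hm := z.mem_sub_one_of_even hj₀
  have hp := z.mem_add_one_of_even hj₀
  have hsome : G.Adj v (z (j₀ - 1)) ∨ G.Adj v (z (j₀ + 1)) := by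
    by_contra! h
    rcases hcf.eq_or_eq_of_adj (z.sub_one_ne_add_one j₀) (z.adj_sub_one j₀).symm (z.adj j₀) huv
      (hB _ hm _ hp) (fun h' => h.1 h'.symm) (fun h' => h.2 h'.symm) with h | h <;>
      exact hvr ⟨_, h.symm⟩
  by_cases hboth : G.Adj v (z (j₀ - 1)) ∧ G.Adj v (z (j₀ + 1))
  · exact ⟨k, ⟨z.replace hB hj₀ (fun j hj hje => hsub _ (z.mem_of_even j hje) (z.injective.ne hj))
      hv.1 hvr hboth.1.symm hboth.2⟩⟩
  refine absurd ⟨z j₀, v, hd₁, hd₂, z.mem_Nset_two hcf hB hj₀, hvB, Set.ncard_eq_one.mpr ?_⟩ hres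
  rcases hsome with h | h
  · exact ⟨_, nbrsIn_eq_singleton hnbr hm h fun h' => hboth ⟨h, h'⟩⟩
  · exact ⟨_, nbrsIn_eq_singleton (fun b hb hvb => (hnbr b hb hvb).symm) hp h
      fun h' => hboth ⟨h', h⟩⟩

lemma isAcyclic_of_isResolvingMove (h : HasAltCycle G B J) (hcf : ClawFree G) (hB : Indep G B)
    (hJ : Indep G J) (hJ' : Indep G J') (hres : IsResolvingMove G B J J') :
    (G.induce (J' ∪ B)).IsAcyclic := by
  classical
  obtain ⟨k, ⟨z⟩⟩ := h
  obtain ⟨u, v, hd₁, hd₂, hu, hv⟩ := hres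
  have hsub : ∀ x ∈ J, x ≠ u → x ∈ J' := fun x => Set.mem_of_sdiff_eq_singleton hd₁
  have hsub' : ∀ x ∈ J', x ≠ v → x ∈ J := fun x => Set.mem_of_sdiff_eq_singleton hd₂
  have huJ : u ∈ J \ J' := hd₁.symm ▸ rfl
  have hvJ : v ∈ J' \ J := hd₂.symm ▸ rfl
  obtain ⟨b, hb, hub⟩ := Set.nonempty_of_ncard_ne_zero (hu.2.symm ▸ two_ne_zero :
    (nbrsIn G B u).ncard ≠ 0)
  obtain ⟨j₀, rfl⟩ := z.mem_range_of_adj hcf hB hJ huJ.1 hb hub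
  have hu' : z j₀ ∉ J' ∪ B := fun h => h.elim huJ.2 hu.1
  have hvr := z.notMem_range_of_mem_sdiff hvJ hv.1
  obtain ⟨φ, hφ, hφv⟩ := z.exists_grade j₀ hvr (if G.Adj v (z (j₀ + 1)) then 0 else 2 * k)
  have hφv₀ : G.Adj v (z (j₀ + 1)) → φ v = 0 := fun h => hφv.trans (if_pos h)
  have hφv₁ : ¬G.Adj v (z (j₀ + 1)) → φ v = 2 * k := fun h => hφv.trans (if_neg h)
  have hnbr : ∀ b ∈ B, G.Adj v b → b = z (j₀ - 1) ∨ b = z (j₀ + 1) := fun b =>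
    z.eq_or_eq_of_adj_of_notMem_range hcf hB hJ' hsub hvJ.1 hvr
  have hgrade : ∀ x ∈ B, ∀ y ∈ J', G.Adj x y → φ x + 1 = φ y ∨ φ y + 1 = φ x :=
    fun x hx y hy => z.grade_add_one_of_adj φ hφ hφv₀ hφv₁ hcf hB hJ hsub' hu'
      (z.even_of_mem hJ huJ.1) hv hnbr hx hy
  refine isAcyclic_induce_of_grading φ (T := {x | x = v ∨ ∃ j, j ≠ j₀ ∧ z j = x}) ?_
    (z.injOn_grade φ hφ ((em _).imp hφv₀ hφv₁)) ?_
  · intro x hx y hy hxy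
    refine (z.eq_or_mem_range_of_adj hcf hB hJ hJ' hsub' hx hy hxy).imp_right ?_
    rintro ⟨j, rfl⟩
    exact ⟨j, fun h => hu' (h ▸ hx), rfl⟩
  · rintro x (hx | hx) y hy hxy
    · exact (hgrade y (hy.resolve_left fun hy => hJ' _ hx _ hy hxy) x hx hxy.symm).symm
    · exact hgrade x hx y (hy.resolve_right fun hy => hB _ hx _ hy hxy) hxy

end HasAltCycle

namespace IsBadCycle

variable {V : Type} {G : SimpleGraph V} {I : Set V} {n : ℕ} {c : ZMod (2 * n) → V}

lemma indep_cycB (hc : IsBadCycle G I n c) : Indep G (cycB c) := by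
  obtain ⟨-, -, -, hchord, -⟩ := hc
  rintro _ ⟨i, hi, rfl⟩ _ ⟨j, hj, rfl⟩ hij
  have hpar := ZMod.even_val_add_one_iff (even_two_mul n)
  rcases hchord i j hij with rfl | rfl
  exacts [hj ((hpar i).mpr hi), hi ((hpar j).mpr hj)]

lemma hasAltCycle (hc : IsBadCycle G I n c) : HasAltCycle G (cycB c) I :=
  ⟨n, ⟨{ toFun := c
         two_le := hc.1
         injective := hc.2.1
         adj := hc.2.2.1
         mem_of_even := fun j hj => (hc.2.2.2.2 j).mpr hj
         mem_of_odd := fun j hj => ⟨j, hj, rfl⟩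
         subset_range := Set.image_subset_range _ _ }⟩⟩

end IsBadCycle

theorem stmt_15_general {V : Type} (G : SimpleGraph V)
    (hcf : ClawFree G) (I : Set V)
    (n : ℕ) (c : ZMod (2*n) → V) (hc : IsBadCycle G I n c)
    (m : ℕ) (f : ℕ → Set V) (hf0 : f 0 = I)
    (hstep : ∀ i < m, TSStep G (f i) (f (i+1))) :
    (∃ i ≤ m, (G.induce (f i ∪ cycB c)).IsAcyclic) ↔
    (∃ i < m, ∃ u v : V, f i \ f (i+1) = {u} ∧ f (i+1) \ f i = {v} ∧
      u ∈ Nset G (cycB c) 2 ∧ v ∈ Nset G (cycB c) 1) := by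
  have hB := hc.indep_cycB
  have hinv : ∀ i ≤ m, (∀ j < i, ¬IsResolvingMove G (cycB c) (f j) (f (j + 1))) →
      HasAltCycle G (cycB c) (f i) := by
    intro i
    induction i with
    | zero => exact fun _ _ => hf0 ▸ hc.hasAltCycle
    | succ i ih =>
      intro hi hno
      exact (ih (by omega) fun j hj => hno j (by omega)).of_tsStep hcf hB (hstep i (by omega))
        (hno i (by omega))
  constructor
  · rintro ⟨i, hi, hacyc⟩
    by_contra hnone
    exact (hinv i hi fun j hj hres => hnone ⟨j, by omega, hres⟩).not_isAcyclic hacyc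
  · intro hex
    classical
    obtain ⟨hi₀, hres⟩ := Nat.find_spec hex
    have hfirst : ∀ j < Nat.find hex, ¬IsResolvingMove G (cycB c) (f j) (f (j + 1)) :=
      fun j hj hres => Nat.find_min hex hj ⟨by omega, hres⟩
    obtain ⟨hJ, hJ', -⟩ := hstep _ hi₀
    exact ⟨_, hi₀, (hinv _ hi₀.le hfirst).isAcyclic_of_isResolvingMove hcf hB hJ hJ' hres⟩

/-- A TS-sequence starting at `I` contains a resolving sequence for an `I`-bad cycle iff
it contains a move from `N_2(B)` to `N_1(B)`. -/
theorem stmt_15 {V : Type} [Fintype V] [DecidableEq V] (G : SimpleGraph V)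
    (hcf : ClawFree G) (I : Set V) (hI : Indep G I)
    (n : ℕ) (c : ZMod (2*n) → V) (hc : IsBadCycle G I n c)
    (m : ℕ) (f : ℕ → Set V) (hf0 : f 0 = I)
    (hstep : ∀ i < m, TSStep G (f i) (f (i+1))) :
    (∃ i ≤ m, (G.induce (f i ∪ cycB c)).IsAcyclic) ↔
    (∃ i < m, ∃ u v : V, f i \ f (i+1) = {u} ∧ f (i+1) \ f i = {v} ∧
      u ∈ Nset G (cycB c) 2 ∧ v ∈ Nset G (cycB c) 1) :=
  stmt_15_general G hcf I n c hc m f hf0 hstep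
end
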